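/- arXiv:2603.04984 — 9 statements merged into one kernel-verified Lean document; each statement's English description precedes it below -/
import Mathlib

section
/- Let m ≥ 0, β ∈ ℝ, τ > 0, and let u, v : [0,τ] → ℂ satisfy d/ds|u(s)|² ≤ m(|u|²+|v|²) + 4|β||u|²|v|², d/ds|v(s)|² ≤ m(|u|²+|v|²) + 4|β||u|²|v|², and |u(s)|² + |v(s)|² = |u(0)|² + |v(0)|² for all s ∈ [0,τ]. Writing 𝔰 = |u(0)|² + |v(0)|², then for all s ∈ [0,τ]: |u(s)|²·|v(s)|² ≤ exp(4|β|·𝔰·τ)·(|u(0)|²·|v(0)|² + m·𝔰²·τ). -/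
/-!
The product `g = |u|²|v|²` has derivative `u'|v|² + |u|²v'`; bounding both derivatives and using
`|u|² + |v|² = 𝔰` gives `g' ≤ 4|β|𝔰 g + m𝔰²`, and Grönwall's inequality integrates this linear
differential inequality.
-/

open Set Real

lemma Real.exp_sub_one_le_mul_exp (x : ℝ) : exp x - 1 ≤ x * exp x := by
  have h := mul_le_mul_of_nonneg_right (one_sub_le_exp_neg x) (exp_pos x).le
  rw [← exp_add, neg_add_cancel, exp_zero] at h
  linarith

lemma gronwallBound_le_exp_mul_mul_add {δ K ε : ℝ} (hK : 0 ≤ K) (hε : 0 ≤ ε) (x : ℝ) :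
    gronwallBound δ K ε x ≤ exp (K * x) * (δ + ε * x) := by
  rcases hK.eq_or_lt with rfl | hK
  · simp [gronwallBound_K0]
  rw [gronwallBound_of_K_ne_0 hK.ne']
  have h : ε / K * (exp (K * x) - 1) ≤ ε / K * (K * x * exp (K * x)) := by
    gcongr
    exact exp_sub_one_le_mul_exp _
  calc δ * exp (K * x) + ε / K * (exp (K * x) - 1)
      ≤ δ * exp (K * x) + ε / K * (K * x * exp (K * x)) := by linarith
    _ = exp (K * x) * (δ + ε * x) := by field_simp

theorem le_exp_mul_mul_add_of_hasDerivAt_le {f f' : ℝ → ℝ} {K ε a b : ℝ} (hK : 0 ≤ K)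
    (hε : 0 ≤ ε) (hf : ∀ x ∈ Icc a b, HasDerivAt f (f' x) x) (hfa : 0 ≤ f a)
    (bound : ∀ x ∈ Ico a b, f' x ≤ K * f x + ε) :
    ∀ x ∈ Icc a b, f x ≤ exp (K * (b - a)) * (f a + ε * (b - a)) := by
  intro x hx
  have hcont : ContinuousOn f (Icc a b) := fun x hx =>
    (hf x hx).continuousAt.continuousWithinAt
  calc f x ≤ gronwallBound (f a) K ε (x - a) :=
        le_gronwallBound_of_liminf_deriv_right_le hcont
          (fun y hy _ hr => (hf y (Ico_subset_Icc_self hy)).hasDerivWithinAt.liminf_right_slope_le hr)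
          le_rfl bound x hx
    _ ≤ gronwallBound (f a) K ε (b - a) := gronwallBound_mono hfa hε hK (by linarith [hx.2])
    _ ≤ exp (K * (b - a)) * (f a + ε * (b - a)) := gronwallBound_le_exp_mul_mul_add hK hε _

lemma mul_add_mul_le_mul_add {a b a' b' c : ℝ} (ha : 0 ≤ a) (hb : 0 ≤ b) (ha' : a' ≤ c)
    (hb' : b' ≤ c) : a' * b + a * b' ≤ c * (a + b) := by
  nlinarith [mul_le_mul_of_nonneg_right ha' hb, mul_le_mul_of_nonneg_left hb' ha]

theorem stmt2_general (m β τ : ℝ) (hm : 0 ≤ m) (u v : ℝ → ℂ) (fu fv : ℝ → ℝ)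
    (hu : ∀ s ∈ Set.Icc (0:ℝ) τ, HasDerivAt (fun t => ‖u t‖^2) (fu s) s)
    (hv : ∀ s ∈ Set.Icc (0:ℝ) τ, HasDerivAt (fun t => ‖v t‖^2) (fv s) s)
    (hfu : ∀ s ∈ Set.Icc (0:ℝ) τ,
      fu s ≤ m * (‖u s‖^2 + ‖v s‖^2) + 4 * |β| * ‖u s‖^2 * ‖v s‖^2)
    (hfv : ∀ s ∈ Set.Icc (0:ℝ) τ,
      fv s ≤ m * (‖u s‖^2 + ‖v s‖^2) + 4 * |β| * ‖u s‖^2 * ‖v s‖^2)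
    (hcons : ∀ s ∈ Set.Icc (0:ℝ) τ, ‖u s‖^2 + ‖v s‖^2 = ‖u 0‖^2 + ‖v 0‖^2) :
    ∀ s ∈ Set.Icc (0:ℝ) τ,
      ‖u s‖^2 * ‖v s‖^2 ≤
        Real.exp (4 * |β| * (‖u 0‖^2 + ‖v 0‖^2) * τ) *
          (‖u 0‖^2 * ‖v 0‖^2 + m * (‖u 0‖^2 + ‖v 0‖^2)^2 * τ) := by
  have hderiv : ∀ t ∈ Icc 0 τ, HasDerivAt (fun t => ‖u t‖^2 * ‖v t‖^2)
      (fu t * ‖v t‖^2 + ‖u t‖^2 * fv t) t := fun t ht => (hu t ht).mul (hv t ht)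
  have hbound : ∀ t ∈ Ico 0 τ, fu t * ‖v t‖^2 + ‖u t‖^2 * fv t ≤
      4 * |β| * (‖u 0‖^2 + ‖v 0‖^2) * (‖u t‖^2 * ‖v t‖^2) + m * (‖u 0‖^2 + ‖v 0‖^2)^2 := by
    intro t ht
    have ht := Ico_subset_Icc_self ht
    calc fu t * ‖v t‖^2 + ‖u t‖^2 * fv t
        ≤ (m * (‖u t‖^2 + ‖v t‖^2) + 4 * |β| * ‖u t‖^2 * ‖v t‖^2) * (‖u t‖^2 + ‖v t‖^2) :=
          mul_add_mul_le_mul_add (by positivity) (by positivity) (hfu t ht) (hfv t ht)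
      _ = _ := by rw [hcons t ht]; ring
  simpa only [sub_zero] using
    le_exp_mul_mul_add_of_hasDerivAt_le (by positivity) (by positivity) hderiv (by positivity)
      hbound

theorem stmt2 (m β τ : ℝ) (hm : 0 ≤ m) (hτ : 0 < τ) (u v : ℝ → ℂ) (fu fv : ℝ → ℝ)
    (hu : ∀ s ∈ Set.Icc (0:ℝ) τ, HasDerivAt (fun t => ‖u t‖^2) (fu s) s)
    (hv : ∀ s ∈ Set.Icc (0:ℝ) τ, HasDerivAt (fun t => ‖v t‖^2) (fv s) s)
    (hfu : ∀ s ∈ Set.Icc (0:ℝ) τ,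
      fu s ≤ m * (‖u s‖^2 + ‖v s‖^2) + 4 * |β| * ‖u s‖^2 * ‖v s‖^2)
    (hfv : ∀ s ∈ Set.Icc (0:ℝ) τ,
      fv s ≤ m * (‖u s‖^2 + ‖v s‖^2) + 4 * |β| * ‖u s‖^2 * ‖v s‖^2)
    (hcons : ∀ s ∈ Set.Icc (0:ℝ) τ, ‖u s‖^2 + ‖v s‖^2 = ‖u 0‖^2 + ‖v 0‖^2) :
    ∀ s ∈ Set.Icc (0:ℝ) τ,
      ‖u s‖^2 * ‖v s‖^2 ≤
        Real.exp (4 * |β| * (‖u 0‖^2 + ‖v 0‖^2) * τ) *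
          (‖u 0‖^2 * ‖v 0‖^2 + m * (‖u 0‖^2 + ‖v 0‖^2)^2 * τ) :=
  stmt2_general m β τ hm u v fu fv hu hv hfu hfv hcons
end

section
/- Let m ≥ 0, β ∈ ℝ, τ ∈ (0,1], c₀ > 0, and let u, v : [0,τ] → ℂ satisfy the hypotheses of the quartic bound (derivative inequalities with constants m and 4|β|, conservation of 𝔰 = |u(0)|²+|v(0)|²), and suppose additionally 𝔰·τ ≤ c₀. Set c₁ = 4|β|·exp(4|β|·c₀) and m₁ = m(c₁·c₀ + 1). Then |u(τ)|² ≤ |u(0)|² + m₁·𝔰·τ + c₁·|u(0)|²·|v(0)|²·τ. -/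
set_option maxHeartbeats 1000000

open Set

lemma gronwall_real {f f' : ℝ → ℝ} {δ K ε a b : ℝ}
    (hf : ContinuousOn f (Icc a b))
    (hf' : ∀ x ∈ Ico a b, HasDerivWithinAt f (f' x) (Ici x) x)
    (ha : f a ≤ δ) (bound : ∀ x ∈ Ico a b, f' x ≤ K * f x + ε) :
    ∀ x ∈ Icc a b, f x ≤ gronwallBound δ K ε (x - a) :=
  le_gronwallBound_of_liminf_deriv_right_le hf
    (fun x hx _r hr => (hf' x hx).liminf_right_slope_le hr) ha bound

lemma gb_le {δ K ε x : ℝ} (hK : 0 ≤ K) (hε : 0 ≤ ε) (hx : 0 ≤ x) :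
    gronwallBound δ K ε x ≤ Real.exp (K * x) * (δ + ε * x) := by
  rcases eq_or_lt_of_le hK with h | h
  · rw [← h, gronwallBound_K0]
    simp
  · rw [gronwallBound_of_K_ne_0 h.ne']
    have hexp : (0:ℝ) < Real.exp (K * x) := Real.exp_pos _
    have key : Real.exp (K * x) - 1 ≤ K * x * Real.exp (K * x) := by
      have h1 := Real.add_one_le_exp (-(K * x))
      have h2 : Real.exp (K * x) * Real.exp (-(K * x)) = 1 := by
        rw [← Real.exp_add]; simp
      nlinarith [mul_le_mul_of_nonneg_left h1 hexp.le]
    have h2 : ε / K * (Real.exp (K * x) - 1) ≤ ε * (x * Real.exp (K * x)) := by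
      rw [div_mul_eq_mul_div, div_le_iff₀ h]
      nlinarith [mul_le_mul_of_nonneg_left key hε]
    nlinarith

theorem stmt3 (m β τ c₀ : ℝ) (hm : 0 ≤ m) (hτ : 0 < τ) (hτ1 : τ ≤ 1) (hc₀ : 0 < c₀)
    (u v : ℝ → ℂ) (fu fv : ℝ → ℝ)
    (hu : ∀ s ∈ Set.Icc (0:ℝ) τ, HasDerivAt (fun t => ‖u t‖^2) (fu s) s)
    (hv : ∀ s ∈ Set.Icc (0:ℝ) τ, HasDerivAt (fun t => ‖v t‖^2) (fv s) s)
    (hfu : ∀ s ∈ Set.Icc (0:ℝ) τ,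
      fu s ≤ m * (‖u s‖^2 + ‖v s‖^2) + 4 * |β| * ‖u s‖^2 * ‖v s‖^2)
    (hfv : ∀ s ∈ Set.Icc (0:ℝ) τ,
      fv s ≤ m * (‖u s‖^2 + ‖v s‖^2) + 4 * |β| * ‖u s‖^2 * ‖v s‖^2)
    (hcons : ∀ s ∈ Set.Icc (0:ℝ) τ, ‖u s‖^2 + ‖v s‖^2 = ‖u 0‖^2 + ‖v 0‖^2)
    (hmass : (‖u 0‖^2 + ‖v 0‖^2) * τ ≤ c₀) :
    ‖u τ‖^2 ≤ ‖u 0‖^2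
      + m * (4 * |β| * Real.exp (4 * |β| * c₀) * c₀ + 1) * (‖u 0‖^2 + ‖v 0‖^2) * τ
      + 4 * |β| * Real.exp (4 * |β| * c₀) * ‖u 0‖^2 * ‖v 0‖^2 * τ := by
  set S : ℝ := ‖u 0‖^2 + ‖v 0‖^2 with hS
  set E : ℝ := Real.exp (4 * |β| * c₀) with hE
  have hβ : (0:ℝ) ≤ |β| := abs_nonneg β
  have hS0 : 0 ≤ S := by positivity
  have hE1 : (1:ℝ) ≤ E := Real.one_le_exp (by positivity)
  have hE0 : (0:ℝ) < E := Real.exp_pos _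
  -- continuity of a := ‖u ·‖², b := ‖v ·‖² on [0, τ]
  have hca : ContinuousOn (fun t => ‖u t‖^2) (Icc 0 τ) :=
    fun s hs => ((hu s hs).continuousAt).continuousWithinAt
  have hcb : ContinuousOn (fun t => ‖v t‖^2) (Icc 0 τ) :=
    fun s hs => ((hv s hs).continuousAt).continuousWithinAt
  -- Step 1: Gronwall for P := a * b
  have hP : ∀ s ∈ Icc (0:ℝ) τ, ‖u s‖^2 * ‖v s‖^2 ≤
      gronwallBound (‖u 0‖^2 * ‖v 0‖^2) (4 * |β| * S) (m * S^2) (s - 0) := by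
    apply gronwall_real (f' := fun s => fu s * ‖v s‖^2 + ‖u s‖^2 * fv s)
    · exact hca.mul hcb
    · intro x hx
      have hx' : x ∈ Icc (0:ℝ) τ := ⟨hx.1, hx.2.le⟩
      exact (((hu x hx').mul (hv x hx')).hasDerivWithinAt)
    · exact le_refl _
    · intro x hx
      have hx' : x ∈ Icc (0:ℝ) τ := ⟨hx.1, hx.2.le⟩
      have hc := hcons x hx'
      have h1 := hfu x hx'
      have h2 := hfv x hx'
      have ha0 : (0:ℝ) ≤ ‖u x‖^2 := by positivity
      have hb0 : (0:ℝ) ≤ ‖v x‖^2 := by positivity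
      have hb1 : ‖v x‖^2 ≤ S := by nlinarith
      have ha1 : ‖u x‖^2 ≤ S := by nlinarith
      rw [hc] at h1 h2
      have e1 : m * S * (‖u x‖^2 + ‖v x‖^2) = m * S * S := by rw [hc]
      have e2 : 4 * |β| * (‖u x‖^2 * ‖v x‖^2) * (‖u x‖^2 + ‖v x‖^2)
          = 4 * |β| * (‖u x‖^2 * ‖v x‖^2) * S := by rw [hc]
      nlinarith [mul_le_mul_of_nonneg_right h1 hb0, mul_le_mul_of_nonneg_left h2 ha0, e1, e2]
  -- bound P by the constant E * (P0 + m S^2 τ)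
  have hPb : ∀ s ∈ Icc (0:ℝ) τ, ‖u s‖^2 * ‖v s‖^2 ≤
      E * (‖u 0‖^2 * ‖v 0‖^2 + m * S^2 * τ) := by
    intro s hs
    refine (hP s hs).trans ?_
    refine (gb_le (by positivity) (by positivity) (by simpa using hs.1)).trans ?_
    have hsτ : s - 0 ≤ τ := by simpa using hs.2
    have hexp : Real.exp (4 * |β| * S * (s - 0)) ≤ E := by
      apply Real.exp_le_exp.2
      have : S * (s - 0) ≤ S * τ := by nlinarith [hs.1]
      nlinarith
    have hms : (0:ℝ) ≤ m * S^2 := by positivity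
    have hin : ‖u 0‖^2 * ‖v 0‖^2 + m * S^2 * (s - 0) ≤
        ‖u 0‖^2 * ‖v 0‖^2 + m * S^2 * τ := by
      nlinarith [mul_le_mul_of_nonneg_left hsτ hms]
    have hs0 : (0:ℝ) ≤ s - 0 := by simpa using hs.1
    have hin0 : (0:ℝ) ≤ ‖u 0‖^2 * ‖v 0‖^2 + m * S^2 * (s - 0) :=
      add_nonneg (by positivity) (mul_nonneg hms hs0)
    calc Real.exp (4 * |β| * S * (s - 0)) * (‖u 0‖^2 * ‖v 0‖^2 + m * S^2 * (s - 0))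
        ≤ E * (‖u 0‖^2 * ‖v 0‖^2 + m * S^2 * (s - 0)) :=
          mul_le_mul_of_nonneg_right hexp hin0
      _ ≤ E * (‖u 0‖^2 * ‖v 0‖^2 + m * S^2 * τ) := by
          exact mul_le_mul_of_nonneg_left hin hE0.le
  -- Step 2: Gronwall (K = 0) for a itself
  set C : ℝ := m * S + 4 * |β| * E * (‖u 0‖^2 * ‖v 0‖^2) + 4 * |β| * E * (m * S * c₀)
    with hC
  have haf : ∀ s ∈ Icc (0:ℝ) τ, ‖u s‖^2 ≤ gronwallBound (‖u 0‖^2) 0 C (s - 0) := by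
    apply gronwall_real
    · exact hca
    · intro x hx
      exact (hu x ⟨hx.1, hx.2.le⟩).hasDerivWithinAt
    · exact le_refl _
    · intro x hx
      have hx' : x ∈ Icc (0:ℝ) τ := ⟨hx.1, hx.2.le⟩
      have h1 := hfu x hx'
      rw [hcons x hx'] at h1
      have h2 := hPb x hx'
      have hq : m * S^2 * τ ≤ m * S * c₀ := by
        nlinarith [mul_le_mul_of_nonneg_left hmass (mul_nonneg hm hS0)]
      rw [zero_mul, zero_add, hC]
      nlinarith [mul_le_mul_of_nonneg_left h2 (by positivity : (0:ℝ) ≤ 4 * |β|),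
        mul_le_mul_of_nonneg_left hq (by positivity : (0:ℝ) ≤ 4 * |β| * E)]
  have hend := haf τ ⟨hτ.le, le_refl τ⟩
  rw [gronwallBound_K0] at hend
  simp only [sub_zero] at hend
  refine hend.trans (le_of_eq ?_)
  rw [hC]
  ring
end

section
/- Let a : ℤ × ℕ → ℝ≥0 and b : ℤ × ℕ → ℝ≥0 satisfy the discrete conservation law a(j, n+1) + b(j, n+1) = a(j-1, n) + b(j+1, n) for all j ∈ ℤ and n ∈ ℕ. Then for any j₁ ∈ ℤ and integers 0 ≤ n₀ ≤ n ≤ n₁, the triangle sum satisfies Σ_{j = j₁ - n₁ + n}^{j₁ + n₁ - n} (a(j,n) + b(j,n)) ≤ Σ_{j = j₁ - n₁ + n₀}^{j₁ + n₁ - n₀} (a(j,n₀) + b(j,n₀)). -/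
lemma step4 (a b : ℤ → ℕ → ℝ)
    (ha : ∀ j n, 0 ≤ a j n) (hb : ∀ j n, 0 ≤ b j n)
    (hcons : ∀ (j : ℤ) (n : ℕ), a j (n+1) + b j (n+1) = a (j-1) n + b (j+1) n)
    (L R : ℤ) (m : ℕ) :
    ∑ j ∈ Finset.Icc (L+1) (R-1), (a j (m+1) + b j (m+1))
      ≤ ∑ j ∈ Finset.Icc L R, (a j m + b j m) := by
  have h1 : ∑ j ∈ Finset.Icc (L+1) (R-1), (a j (m+1) + b j (m+1))
      = ∑ j ∈ Finset.Icc (L+1) (R-1), a (j-1) m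
        + ∑ j ∈ Finset.Icc (L+1) (R-1), b (j+1) m := by
    rw [← Finset.sum_add_distrib]
    exact Finset.sum_congr rfl fun j _ => hcons j m
  have ha' : ∑ j ∈ Finset.Icc (L+1) (R-1), a (j-1) m
      = ∑ j ∈ Finset.Icc L (R-2), a j m := by
    rw [show Finset.Icc (L+1) (R-1) = (Finset.Icc L (R-2)).map (addRightEmbedding 1) by
      rw [Finset.map_add_right_Icc]; ring_nf]
    rw [Finset.sum_map]
    exact Finset.sum_congr rfl fun j _ => by simp [addRightEmbedding]
  have hb' : ∑ j ∈ Finset.Icc (L+1) (R-1), b (j+1) m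
      = ∑ j ∈ Finset.Icc (L+2) R, b j m := by
    rw [show Finset.Icc (L+1) (R-1) = (Finset.Icc (L+2) R).map (addRightEmbedding (-1)) by
      rw [Finset.map_add_right_Icc]; ring_nf]
    rw [Finset.sum_map]
    exact Finset.sum_congr rfl fun j _ => by simp [addRightEmbedding]
  rw [h1, ha', hb']
  have hsa : ∑ j ∈ Finset.Icc L (R-2), a j m ≤ ∑ j ∈ Finset.Icc L R, a j m :=
    Finset.sum_le_sum_of_subset_of_nonneg
      (Finset.Icc_subset_Icc_right (by omega)) (fun j _ _ => ha j m)
  have hsb : ∑ j ∈ Finset.Icc (L+2) R, b j m ≤ ∑ j ∈ Finset.Icc L R, b j m :=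
    Finset.sum_le_sum_of_subset_of_nonneg
      (Finset.Icc_subset_Icc_left (by omega)) (fun j _ _ => hb j m)
  calc _ ≤ ∑ j ∈ Finset.Icc L R, a j m + ∑ j ∈ Finset.Icc L R, b j m :=
        add_le_add hsa hsb
    _ = _ := by rw [← Finset.sum_add_distrib]

theorem stmt4 (a b : ℤ → ℕ → ℝ)
    (ha : ∀ j n, 0 ≤ a j n) (hb : ∀ j n, 0 ≤ b j n)
    (hcons : ∀ (j : ℤ) (n : ℕ), a j (n+1) + b j (n+1) = a (j-1) n + b (j+1) n)
    (j₁ : ℤ) (n₀ n n₁ : ℕ) (h1 : n₀ ≤ n) (h2 : n ≤ n₁) :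
    ∑ j ∈ Finset.Icc (j₁ - (n₁ : ℤ) + (n : ℤ)) (j₁ + (n₁ : ℤ) - (n : ℤ)), (a j n + b j n)
      ≤ ∑ j ∈ Finset.Icc (j₁ - (n₁ : ℤ) + (n₀ : ℤ)) (j₁ + (n₁ : ℤ) - (n₀ : ℤ)),
          (a j n₀ + b j n₀) := by
  induction n, h1 using Nat.le_induction with
  | base => exact le_refl _
  | succ m hm ih =>
    have hm1 : m ≤ n₁ := by omega
    have key := step4 a b ha hb hcons (j₁ - (n₁ : ℤ) + (m : ℤ)) (j₁ + (n₁ : ℤ) - (m : ℤ)) m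
    have e1 : (j₁ - (n₁ : ℤ) + ((m : ℕ) + 1 : ℕ)) = j₁ - (n₁ : ℤ) + (m : ℤ) + 1 := by
      push_cast; ring
    have e2 : (j₁ + (n₁ : ℤ) - ((m : ℕ) + 1 : ℕ)) = j₁ + (n₁ : ℤ) - (m : ℤ) - 1 := by
      push_cast; ring
    rw [e1, e2]
    exact le_trans key (ih hm1)
end

section
/- Let a, b : ℤ × ℕ → ℝ≥0 satisfy a(j, n+1) + b(j, n+1) = a(j-1, n) + b(j+1, n) for all j ∈ ℤ, n ∈ ℕ. Then for any j₁ ∈ ℤ and 0 ≤ n₀ ≤ n₁, the lateral boundary sum satisfies Σ_{n=0}^{n₁-n₀} a(j₁+n, n₁-n) + Σ_{n=0}^{n₁-n₀} b(j₁-n, n₁-n) ≤ Σ_{j = j₁ - n₁ + n₀}^{j₁ + n₁ - n₀} (a(j, n₀) + b(j, n₀)). -/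
/-!
Summing the conservation law `a(j, n+1) + b(j, n+1) = a(j-1, n) + b(j+1, n)` over a row
`L ≤ j ≤ U` shows that the row mass at time `n + 1` is carried by `a` on `[L-1, U-1]` and by `b`
on `[L+1, U+1]` at time `n`. Both windows sit inside `[L-1, U+1]` and leave out `a(U+1, n)` and
`b(L-1, n)` respectively, so by nonnegativity the row mass at time `n + 1` plus these two edge
values is at most the mass on the wider row at time `n`. Iterating this from the apex down to the
bottom of the characteristic triangle collects exactly the values along its two slanted edges.
-/

open Finset

lemma sum_Icc_comp_add {α M : Type*} [AddCommMonoid α] [PartialOrder α]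
    [IsOrderedCancelAddMonoid α] [ExistsAddOfLE α] [LocallyFiniteOrder α] [AddCommMonoid M]
    (f : α → M) (L U c : α) :
    ∑ j ∈ Icc L U, f (j + c) = ∑ j ∈ Icc (L + c) (U + c), f j := by
  rw [← map_add_right_Icc, sum_map]
  rfl

section CharacteristicTriangle

variable {a b : ℤ → ℕ → ℝ}

lemma sum_Icc_succ_add_edges_le (ha : ∀ j n, 0 ≤ a j n) (hb : ∀ j n, 0 ≤ b j n)
    (hcons : ∀ (j : ℤ) (n : ℕ), a j (n+1) + b j (n+1) = a (j-1) n + b (j+1) n)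
    {L U : ℤ} (hLU : L - 1 ≤ U + 1) (n : ℕ) :
    ∑ j ∈ Icc L U, (a j (n + 1) + b j (n + 1)) + (a (U + 1) n + b (L - 1) n)
      ≤ ∑ j ∈ Icc (L - 1) (U + 1), (a j n + b j n) := by
  have transport : ∑ j ∈ Icc L U, (a j (n + 1) + b j (n + 1))
      = ∑ j ∈ Icc (L - 1) (U - 1), a j n + ∑ j ∈ Icc (L + 1) (U + 1), b j n := by
    simp only [hcons, sum_add_distrib, sub_eq_add_neg]
    rw [sum_Icc_comp_add (a · n), sum_Icc_comp_add (b · n)]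
  have a_le : ∑ j ∈ Icc (L - 1) (U - 1), a j n + a (U + 1) n
      ≤ ∑ j ∈ Icc (L - 1) (U + 1), a j n := by
    calc _ = ∑ j ∈ insert (U + 1) (Icc (L - 1) (U - 1)), a j n := by
          rw [sum_insert (by simp), add_comm]
      _ ≤ _ := sum_le_sum_of_subset_of_nonneg (by intro j; simp; omega) fun j _ _ => ha j n
  have b_le : ∑ j ∈ Icc (L + 1) (U + 1), b j n + b (L - 1) n
      ≤ ∑ j ∈ Icc (L - 1) (U + 1), b j n := by
    calc _ = ∑ j ∈ insert (L - 1) (Icc (L + 1) (U + 1)), b j n := by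
          rw [sum_insert (by simp), add_comm]
      _ ≤ _ := sum_le_sum_of_subset_of_nonneg (by intro j; simp; omega) fun j _ _ => hb j n
  rw [transport, sum_add_distrib]
  linarith

lemma sum_edges_le_sum_base (ha : ∀ j n, 0 ≤ a j n) (hb : ∀ j n, 0 ≤ b j n)
    (hcons : ∀ (j : ℤ) (n : ℕ), a j (n+1) + b j (n+1) = a (j-1) n + b (j+1) n)
    (j₁ : ℤ) (m n : ℕ) :
    ∑ i ∈ range (m + 1), (a (j₁ + i) (n + m - i) + b (j₁ - i) (n + m - i))
      ≤ ∑ j ∈ Icc (j₁ - m) (j₁ + m), (a j n + b j n) := by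
  induction m generalizing n with
  | zero => simp
  | succ m ih =>
    have shift : ∀ i ∈ range (m + 1), n + (m + 1) - i = n + 1 + m - i := fun i _ => by omega
    calc ∑ i ∈ range (m + 1 + 1), (a (j₁ + i) (n + (m + 1) - i) + b (j₁ - i) (n + (m + 1) - i))
        = ∑ i ∈ range (m + 1), (a (j₁ + i) (n + 1 + m - i) + b (j₁ - i) (n + 1 + m - i))
            + (a (j₁ + m + 1) n + b (j₁ - m - 1) n) := by
          rw [sum_range_succ, sum_congr rfl fun i hi => by rw [shift i hi], Nat.add_sub_cancel]
          push_cast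
          rw [← add_assoc j₁, ← sub_sub j₁]
      _ ≤ ∑ j ∈ Icc (j₁ - m) (j₁ + m), (a j (n + 1) + b j (n + 1))
            + (a (j₁ + m + 1) n + b (j₁ - m - 1) n) := by
          gcongr
          exact ih (n + 1)
      _ ≤ ∑ j ∈ Icc (j₁ - ↑(m + 1)) (j₁ + ↑(m + 1)), (a j n + b j n) := by
          rw [Nat.cast_succ, ← sub_sub j₁, ← add_assoc j₁]
          exact sum_Icc_succ_add_edges_le ha hb hcons (by omega : j₁ - m - 1 ≤ j₁ + m + 1) n

end CharacteristicTriangle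

theorem stmt5 (a b : ℤ → ℕ → ℝ)
    (ha : ∀ j n, 0 ≤ a j n) (hb : ∀ j n, 0 ≤ b j n)
    (hcons : ∀ (j : ℤ) (n : ℕ), a j (n+1) + b j (n+1) = a (j-1) n + b (j+1) n)
    (j₁ : ℤ) (n₀ n₁ : ℕ) (h : n₀ ≤ n₁) :
    (∑ n ∈ Finset.range (n₁ - n₀ + 1), a (j₁ + (n : ℤ)) (n₁ - n))
      + (∑ n ∈ Finset.range (n₁ - n₀ + 1), b (j₁ - (n : ℤ)) (n₁ - n))
      ≤ ∑ j ∈ Finset.Icc (j₁ - (n₁ : ℤ) + (n₀ : ℤ)) (j₁ + (n₁ : ℤ) - (n₀ : ℤ)),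
          (a j n₀ + b j n₀) := by
  have triangle := sum_edges_le_sum_base ha hb hcons j₁ (n₁ - n₀) n₀
  rw [Nat.add_sub_cancel' h, Nat.cast_sub h] at triangle
  rw [← sum_add_distrib, sub_add, add_sub_assoc]
  exact triangle
end

section
/- Let c₂ ≥ 1, m₁ ≥ 0, c₀ ≥ 0, and let a, b : ℤ × ℕ → ℝ≥0 satisfy a(j,n) ≤ c₂·(a(j-n, 0) + m₁·c₀) and b(j,n) ≤ c₂·(b(j+n, 0) + m₁·c₀) for all j, n, together with the summability bounds Σ_j (a(j,0) + b(j,0))·τ ≤ c₀ and Σ_j (a(j,n) + b(j,n))·τ ≤ c₀ for all n ≤ n₁, where τ > 0. Then Σ_{n=n₀}^{n₁} Σ_{j∈ℤ} a(j,n)·b(j,n)·τ² ≤ c₀²·c₂·(c₂ + m₁·c₀ + m₁·(n₁-n₀+1)·τ). -/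
/-- Key pointwise inequality: if `0 ≤ x ≤ A + M` and `0 ≤ y ≤ B + M`, then
`x*y ≤ A*B + M*x + M*y`. -/
lemma stmt6_key {x y A B M : ℝ} (hx : 0 ≤ x) (hy : 0 ≤ y) (hA : 0 ≤ A) (hB : 0 ≤ B)
    (hM : 0 ≤ M) (h1 : x ≤ A + M) (h2 : y ≤ B + M) : x * y ≤ A * B + M * x + M * y := by
  rcases le_total x M with h | h
  · nlinarith [mul_nonneg (sub_nonneg.mpr h) hy, mul_nonneg hA hB, mul_nonneg hM hx]
  · nlinarith [mul_nonneg (sub_nonneg.mpr h) (sub_nonneg.mpr h2),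
      mul_le_mul_of_nonneg_right h1 hB, sq_nonneg M, mul_nonneg hM hy]

set_option maxHeartbeats 1600000 in
theorem stmt6 (c₂ m₁ c₀ τ : ℝ) (hc₂ : 1 ≤ c₂) (hm₁ : 0 ≤ m₁) (hc₀ : 0 ≤ c₀) (hτ : 0 < τ)
    (a b : ℤ → ℕ → ℝ)
    (ha : ∀ j n, 0 ≤ a j n) (hb : ∀ j n, 0 ≤ b j n)
    (hA : ∀ (j : ℤ) (n : ℕ), a j n ≤ c₂ * (a (j - n) 0 + m₁ * c₀))
    (hB : ∀ (j : ℤ) (n : ℕ), b j n ≤ c₂ * (b (j + n) 0 + m₁ * c₀))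
    (n₀ n₁ : ℕ)
    (hsa : ∀ n, Summable (fun j : ℤ => a j n))
    (hsb : ∀ n, Summable (fun j : ℤ => b j n))
    (hmass : ∀ n ≤ n₁, (∑' j : ℤ, (a j n + b j n)) * τ ≤ c₀) :
    ∑ n ∈ Finset.Icc n₀ n₁, ∑' j : ℤ, a j n * b j n * τ^2
      ≤ c₀^2 * c₂ * (c₂ + m₁ * c₀ + m₁ * ((n₁ - n₀ + 1 : ℕ) : ℝ) * τ) := by
  have hc₂' : (0:ℝ) ≤ c₂ := le_trans zero_le_one hc₂
  set A0 : ℝ := ∑' j : ℤ, a j 0 with hA0def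
  set B0 : ℝ := ∑' j : ℤ, b j 0 with hB0def
  have hA0n : 0 ≤ A0 := tsum_nonneg fun j => ha j 0
  have hB0n : 0 ≤ B0 := tsum_nonneg fun j => hb j 0
  have hsum0 : A0 + B0 = ∑' j : ℤ, (a j 0 + b j 0) := (Summable.tsum_add (hsa 0) (hsb 0)).symm
  have hAB : (A0 + B0) * τ ≤ c₀ := by rw [hsum0]; exact hmass 0 (Nat.zero_le n₁)
  have hA0τ : A0 * τ ≤ c₀ := by nlinarith [mul_nonneg hB0n hτ.le]
  have hB0τ : B0 * τ ≤ c₀ := by nlinarith [mul_nonneg hA0n hτ.le]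
  have hble : ∀ q : ℤ, b q 0 ≤ B0 := fun q => Summable.le_tsum (hsb 0) q (fun j _ => hb j 0)
  -- summability of shifted products
  have hshP : ∀ n : ℕ, Summable (fun p : ℤ => a p 0 * b (p + 2*(n:ℤ)) 0) := by
    intro n
    apply Summable.of_nonneg_of_le (fun p => mul_nonneg (ha _ _) (hb _ _))
      (fun p => mul_le_mul_of_nonneg_left (hble _) (ha _ _))
    exact (hsa 0).mul_right B0
  have hshift : ∀ n : ℕ, Summable (fun j : ℤ => a (j - (n:ℤ)) 0) := by
    intro n
    exact (Equiv.subRight (n:ℤ)).summable_iff.mpr (hsa 0)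
  have hshsum : ∀ n : ℕ, Summable (fun j : ℤ => a (j - (n:ℤ)) 0 * b (j + (n:ℤ)) 0) := by
    intro n
    apply Summable.of_nonneg_of_le (fun j => mul_nonneg (ha _ _) (hb _ _))
      (fun j => mul_le_mul_of_nonneg_left (hble _) (ha _ _))
    exact (hshift n).mul_right B0
  -- per-step bound
  have main : ∀ n ∈ Finset.Icc n₀ n₁,
      (∑' j : ℤ, a j n * b j n * τ^2)
        ≤ c₂^2 * (∑' p : ℤ, a p 0 * b (p + 2*(n:ℤ)) 0) * τ^2 + c₂*m₁*c₀*τ*c₀ := by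
    intro n hn
    rw [Finset.mem_Icc] at hn
    have hsR : Summable (fun j : ℤ =>
        c₂^2 * (a (j-(n:ℤ)) 0 * b (j+(n:ℤ)) 0) + c₂*m₁*c₀*(a j n + b j n)) :=
      ((hshsum n).mul_left _).add (((hsa n).add (hsb n)).mul_left _)
    have hpt : ∀ j : ℤ, a j n * b j n
        ≤ c₂^2 * (a (j-(n:ℤ)) 0 * b (j+(n:ℤ)) 0) + c₂*m₁*c₀*(a j n + b j n) := by
      intro j
      have h1 : a j n ≤ c₂ * a (j-(n:ℤ)) 0 + c₂*(m₁*c₀) := by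
        have := hA j n; nlinarith
      have h2 : b j n ≤ c₂ * b (j+(n:ℤ)) 0 + c₂*(m₁*c₀) := by
        have := hB j n; nlinarith
      have hkey := stmt6_key (x := a j n) (y := b j n) (A := c₂ * a (j-(n:ℤ)) 0)
        (B := c₂ * b (j+(n:ℤ)) 0) (M := c₂*(m₁*c₀)) (ha j n) (hb j n)
        (mul_nonneg hc₂' (ha _ _)) (mul_nonneg hc₂' (hb _ _))
        (mul_nonneg hc₂' (mul_nonneg hm₁ hc₀)) h1 h2
      nlinarith [hkey]
    have hsL : Summable (fun j : ℤ => a j n * b j n * τ^2) := by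
      apply Summable.of_nonneg_of_le
        (fun j => mul_nonneg (mul_nonneg (ha j n) (hb j n)) (sq_nonneg τ))
        (fun j => mul_le_mul_of_nonneg_right (hpt j) (sq_nonneg τ))
      exact hsR.mul_right _
    have hre : (∑' j : ℤ, a (j - (n:ℤ)) 0 * b (j + (n:ℤ)) 0)
        = ∑' p : ℤ, a p 0 * b (p + 2*(n:ℤ)) 0 := by
      rw [← (Equiv.addRight (n:ℤ)).tsum_eq
        (fun j => a (j - (n:ℤ)) 0 * b (j + (n:ℤ)) 0)]
      exact tsum_congr fun p => by
        simp only [Equiv.coe_addRight]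
        rw [show p + (n:ℤ) - n = p by ring, show p + (n:ℤ) + n = p + 2*n by ring]
    have hQ : (∑' j : ℤ, (a j n + b j n)) * τ ≤ c₀ := hmass n hn.2
    have hQn : 0 ≤ ∑' j : ℤ, (a j n + b j n) :=
      tsum_nonneg fun j => add_nonneg (ha j n) (hb j n)
    calc ∑' j : ℤ, a j n * b j n * τ^2
        ≤ ∑' j : ℤ, (c₂^2 * (a (j-(n:ℤ)) 0 * b (j+(n:ℤ)) 0)
            + c₂*m₁*c₀*(a j n + b j n)) * τ^2 := by
          exact Summable.tsum_le_tsum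
            (fun j => mul_le_mul_of_nonneg_right (hpt j) (sq_nonneg τ))
            hsL (hsR.mul_right _)
      _ = (∑' j : ℤ, (c₂^2 * (a (j-(n:ℤ)) 0 * b (j+(n:ℤ)) 0)
            + c₂*m₁*c₀*(a j n + b j n))) * τ^2 := tsum_mul_right
      _ = (c₂^2 * (∑' j : ℤ, a (j-(n:ℤ)) 0 * b (j+(n:ℤ)) 0)
            + c₂*m₁*c₀*(∑' j : ℤ, (a j n + b j n))) * τ^2 := by
          rw [Summable.tsum_add ((hshsum n).mul_left _) (((hsa n).add (hsb n)).mul_left _),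
            tsum_mul_left, tsum_mul_left]
      _ = c₂^2 * (∑' p : ℤ, a p 0 * b (p + 2*(n:ℤ)) 0) * τ^2
            + (c₂*m₁*c₀*τ) * ((∑' j : ℤ, (a j n + b j n)) * τ) := by
          rw [hre]; ring
      _ ≤ c₂^2 * (∑' p : ℤ, a p 0 * b (p + 2*(n:ℤ)) 0) * τ^2 + c₂*m₁*c₀*τ*c₀ := by
          have hnn : (0:ℝ) ≤ c₂*m₁*c₀*τ := by positivity
          nlinarith [mul_le_mul_of_nonneg_left hQ hnn]
  -- sum of the shifted products over n
  have hPsum : (∑ n ∈ Finset.Icc n₀ n₁, ∑' p : ℤ, a p 0 * b (p + 2*(n:ℤ)) 0)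
      ≤ A0 * B0 := by
    rw [← Summable.tsum_finsetSum (fun n _ => hshP n)]
    have hinner : ∀ p : ℤ,
        (∑ n ∈ Finset.Icc n₀ n₁, a p 0 * b (p + 2*(n:ℤ)) 0) ≤ a p 0 * B0 := by
      intro p
      rw [← Finset.mul_sum]
      refine mul_le_mul_of_nonneg_left ?_ (ha p 0)
      have hinj : ∀ x ∈ Finset.Icc n₀ n₁, ∀ y ∈ Finset.Icc n₀ n₁,
          (fun m : ℕ => p + 2*(m:ℤ)) x = (fun m : ℕ => p + 2*(m:ℤ)) y → x = y := by
        intro x _ y _ h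
        simp only at h
        omega
      calc (∑ n ∈ Finset.Icc n₀ n₁, b (p + 2*(n:ℤ)) 0)
          = ∑ q ∈ (Finset.Icc n₀ n₁).image (fun m : ℕ => p + 2*(m:ℤ)), b q 0 :=
            (Finset.sum_image (f := fun q : ℤ => b q 0) hinj).symm
        _ ≤ B0 := Summable.sum_le_tsum _ (fun q _ => hb q 0) (hsb 0)
    calc (∑' p : ℤ, ∑ n ∈ Finset.Icc n₀ n₁, a p 0 * b (p + 2*(n:ℤ)) 0)
        ≤ ∑' p : ℤ, a p 0 * B0 :=
          Summable.tsum_le_tsum hinner (summable_sum (fun n _ => hshP n)) ((hsa 0).mul_right B0)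
      _ = A0 * B0 := tsum_mul_right
  have hcard : ((Finset.Icc n₀ n₁).card : ℝ) ≤ ((n₁ - n₀ + 1 : ℕ) : ℝ) := by
    have h : (Finset.Icc n₀ n₁).card ≤ n₁ - n₀ + 1 := by
      rw [Nat.card_Icc]; omega
    exact_mod_cast h
  calc ∑ n ∈ Finset.Icc n₀ n₁, ∑' j : ℤ, a j n * b j n * τ^2
      ≤ ∑ n ∈ Finset.Icc n₀ n₁,
          (c₂^2 * (∑' p : ℤ, a p 0 * b (p + 2*(n:ℤ)) 0) * τ^2 + c₂*m₁*c₀*τ*c₀) :=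
        Finset.sum_le_sum main
    _ = c₂^2 * (∑ n ∈ Finset.Icc n₀ n₁, ∑' p : ℤ, a p 0 * b (p + 2*(n:ℤ)) 0) * τ^2
          + ((Finset.Icc n₀ n₁).card : ℝ) * (c₂*m₁*c₀*τ*c₀) := by
        rw [Finset.sum_add_distrib, Finset.sum_const, nsmul_eq_mul]
        congr 1
        rw [Finset.mul_sum, Finset.sum_mul]
    _ ≤ c₂^2 * (A0 * B0) * τ^2
          + ((n₁ - n₀ + 1 : ℕ) : ℝ) * (c₂*m₁*c₀*τ*c₀) := by
        have h1 : c₂^2 * (∑ n ∈ Finset.Icc n₀ n₁, ∑' p : ℤ, a p 0 * b (p + 2*(n:ℤ)) 0) * τ^2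
            ≤ c₂^2 * (A0 * B0) * τ^2 := by
          apply mul_le_mul_of_nonneg_right _ (sq_nonneg τ)
          exact mul_le_mul_of_nonneg_left hPsum (sq_nonneg c₂)
        have h2 : ((Finset.Icc n₀ n₁).card : ℝ) * (c₂*m₁*c₀*τ*c₀)
            ≤ ((n₁ - n₀ + 1 : ℕ) : ℝ) * (c₂*m₁*c₀*τ*c₀) :=
          mul_le_mul_of_nonneg_right hcard (by positivity)
        linarith
    _ ≤ c₀^2 * c₂ * (c₂ + m₁ * c₀ + m₁ * ((n₁ - n₀ + 1 : ℕ) : ℝ) * τ) := by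
        have hABτ : (A0*τ) * (B0*τ) ≤ c₀ * c₀ :=
          mul_le_mul hA0τ hB0τ (mul_nonneg hB0n hτ.le) hc₀
        have hN : (0:ℝ) ≤ ((n₁ - n₀ + 1 : ℕ) : ℝ) := Nat.cast_nonneg _
        nlinarith [sq_nonneg c₂, mul_nonneg (mul_nonneg (mul_nonneg (mul_nonneg hc₂' hm₁) hc₀) hc₀) hc₀,
          mul_nonneg (mul_nonneg (mul_nonneg (mul_nonneg hN hc₂') hm₁) hc₀) hτ.le]
end

section
/- Let m ≥ 0, α, β ∈ ℝ and let (u,v), (ũ,ṽ) : [0,τ] → ℂ² be two solutions of the nonlinear Dirac ODE system w' = (i m v + i α u|v|² + 2iβ(conj(u)v + u·conj(v))v, i m u + i α v|u|² + 2iβ(conj(u)v + u·conj(v))u). Set U = u - ũ, V = v - ṽ, L(s) = |U(s)|² + |V(s)|², and D(s) = |U(s)|²(|v(s)|² + |ṽ(s)|²) + |V(s)|²(|u(s)|² + |ũ(s)|²). Then with C* = 4(|α| + 4|β|), one has dL/ds ≤ 2·C*·D(s) for all s ∈ [0,τ]. -/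
noncomputable def diracN1 (m α β : ℝ) (u v : ℂ) : ℂ :=
  Complex.I * m * v + Complex.I * α * u * ((‖v‖ : ℂ))^2 +
    Complex.I * 2 * β * ((starRingEnd ℂ) u * v + u * (starRingEnd ℂ) v) * v

noncomputable def diracN2 (m α β : ℝ) (u v : ℂ) : ℂ :=
  Complex.I * m * u + Complex.I * α * v * ((‖u‖ : ℂ))^2 +
    Complex.I * 2 * β * ((starRingEnd ℂ) u * v + u * (starRingEnd ℂ) v) * u

/-! The derivative of `L` is `2 Re(conj U · U' + conj V · V')`, and the mass contributions
`Re(conj U · i m V)` and `Re(conj V · i m U)` cancel. Each cubic difference is split by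
`x y - x' y' = (x - x') y + x' (y - y')` into pieces carrying a factor `U` or `V`, so after
multiplication by `conj U` every term is a product of two of `|U||v|`, `|U||ṽ|`, `|V||ũ|`, and
`2xy ≤ x² + y²` bounds it by `D`. The `V`-equation is the `U`-equation with `u` and `v`
exchanged, so one estimate serves both. -/

open Complex ComplexConjugate

lemma norm_mul_sub_mul_le {R : Type*} [SeminormedRing R] (a b c d : R) :
    ‖a * b - c * d‖ ≤ ‖a - c‖ * ‖b‖ + ‖c‖ * ‖b - d‖ :=
  calc ‖a * b - c * d‖ = ‖(a - c) * b + c * (b - d)‖ := by noncomm_ring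
    _ ≤ ‖a - c‖ * ‖b‖ + ‖c‖ * ‖b - d‖ :=
      (norm_add_le _ _).trans (add_le_add (norm_mul_le _ _) (norm_mul_le _ _))

lemma abs_norm_sq_sub_norm_sq_le {E : Type*} [SeminormedAddCommGroup E] (x y : E) :
    |‖x‖ ^ 2 - ‖y‖ ^ 2| ≤ ‖x - y‖ * (‖x‖ + ‖y‖) := by
  rw [sq_sub_sq, abs_mul, abs_of_nonneg (by positivity : 0 ≤ ‖x‖ + ‖y‖), mul_comm]
  exact mul_le_mul_of_nonneg_right (abs_norm_sub_norm_le x y) (by positivity)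

lemma norm_mul_sq_norm_sub_le (u v ut vt : ℂ) :
    ‖u * (‖v‖ : ℂ) ^ 2 - ut * (‖vt‖ : ℂ) ^ 2‖
      ≤ ‖u - ut‖ * ‖v‖ ^ 2 + ‖ut‖ * (‖v - vt‖ * (‖v‖ + ‖vt‖)) := by
  refine (norm_mul_sub_mul_le _ _ _ _).trans ?_
  rw [← ofReal_pow, ← ofReal_pow, ← ofReal_sub, norm_real, Real.norm_eq_abs, norm_real,
    Real.norm_eq_abs, abs_of_nonneg (by positivity)]
  gcongr
  exact abs_norm_sq_sub_norm_sq_le v vt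

lemma norm_conj_mul_add_mul_conj_le (u v : ℂ) : ‖conj u * v + u * conj v‖ ≤ 2 * (‖u‖ * ‖v‖) := by
  refine (norm_add_le _ _).trans_eq ?_
  simp only [norm_mul, RCLike.norm_conj]
  ring

lemma norm_conj_mul_add_mul_conj_sub_le (u v ut vt : ℂ) :
    ‖(conj u * v + u * conj v) - (conj ut * vt + ut * conj vt)‖
      ≤ 2 * (‖u - ut‖ * ‖v‖ + ‖ut‖ * ‖v - vt‖) := by
  have h₁ := norm_mul_sub_mul_le (conj u) v (conj ut) vt
  have h₂ := norm_mul_sub_mul_le u (conj v) ut (conj vt)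
  rw [← map_sub, RCLike.norm_conj, RCLike.norm_conj] at h₁
  rw [← map_sub, RCLike.norm_conj, RCLike.norm_conj] at h₂
  calc _ = ‖(conj u * v - conj ut * vt) + (u * conj v - ut * conj vt)‖ := by ring_nf
    _ ≤ _ := (norm_add_le _ _).trans (by linarith)

lemma norm_conj_mul_add_mul_conj_mul_sub_le (u v ut vt : ℂ) :
    ‖(conj u * v + u * conj v) * v - (conj ut * vt + ut * conj vt) * vt‖
      ≤ 2 * (‖u - ut‖ * ‖v‖ + ‖ut‖ * ‖v - vt‖) * ‖v‖ + 2 * (‖ut‖ * ‖vt‖) * ‖v - vt‖ := by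
  refine (norm_mul_sub_mul_le _ _ _ _).trans ?_
  gcongr
  · exact norm_conj_mul_add_mul_conj_sub_le u v ut vt
  · exact norm_conj_mul_add_mul_conj_le ut vt

lemma diracN1_eq (m α β : ℝ) (u v : ℂ) :
    diracN1 m α β u v = I * m * v + I * α * (u * (‖v‖ : ℂ) ^ 2)
      + I * (2 * β) * ((conj u * v + u * conj v) * v) := by
  simp only [diracN1]
  ring

lemma diracN2_eq_diracN1 (m α β : ℝ) (u v : ℂ) : diracN2 m α β u v = diracN1 m α β v u := by
  simp only [diracN1, diracN2]
  ring

lemma inner_I_mul_add_inner_I_mul (m : ℝ) (z w : ℂ) :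
    inner ℝ z (I * m * w) + inner ℝ w (I * m * z) = 0 := by
  simp only [Complex.inner, mul_re, mul_im, I_re, I_im, ofReal_re, ofReal_im, conj_re, conj_im]
  ring

noncomputable def diracDiffWeight (u v ut vt : ℂ) : ℝ :=
  ‖u - ut‖ ^ 2 * (‖v‖ ^ 2 + ‖vt‖ ^ 2) + ‖v - vt‖ ^ 2 * (‖u‖ ^ 2 + ‖ut‖ ^ 2)

lemma diracDiffWeight_swap (u v ut vt : ℂ) :
    diracDiffWeight v u vt ut = diracDiffWeight u v ut vt := by
  simp only [diracDiffWeight]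
  ring

section Young

variable (a b p q pt qt : ℝ)

lemma cubic_young_le :
    a * (a * q ^ 2 + pt * (b * (q + qt)))
      ≤ 2 * (a ^ 2 * (q ^ 2 + qt ^ 2) + b ^ 2 * (p ^ 2 + pt ^ 2)) := by
  nlinarith [sq_nonneg (a * q - pt * b), sq_nonneg (a * qt - pt * b), sq_nonneg (b * p),
    sq_nonneg (a * qt)]

lemma coupling_young_le :
    a * (2 * (a * q + pt * b) * q + 2 * (pt * qt) * b)
      ≤ 4 * (a ^ 2 * (q ^ 2 + qt ^ 2) + b ^ 2 * (p ^ 2 + pt ^ 2)) := by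
  nlinarith [sq_nonneg (a * q - pt * b), sq_nonneg (a * qt - pt * b), sq_nonneg (b * p),
    sq_nonneg (a * qt), sq_nonneg (a * q)]

end Young

lemma inner_diracN1_sub_sub_mass_le (m α β : ℝ) (u v ut vt : ℂ) :
    inner ℝ (u - ut) (diracN1 m α β u v - diracN1 m α β ut vt - I * m * (v - vt))
      ≤ 2 * (|α| + 4 * |β|) * diracDiffWeight u v ut vt := by
  have hN : ‖diracN1 m α β u v - diracN1 m α β ut vt - I * m * (v - vt)‖
      ≤ |α| * (‖u - ut‖ * ‖v‖ ^ 2 + ‖ut‖ * (‖v - vt‖ * (‖v‖ + ‖vt‖)))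
        + 2 * |β| * (2 * (‖u - ut‖ * ‖v‖ + ‖ut‖ * ‖v - vt‖) * ‖v‖
          + 2 * (‖ut‖ * ‖vt‖) * ‖v - vt‖) := by
    rw [diracN1_eq, diracN1_eq]
    calc _ = ‖I * α * (u * (‖v‖ : ℂ) ^ 2 - ut * (‖vt‖ : ℂ) ^ 2)
          + I * (2 * β) * ((conj u * v + u * conj v) * v
            - (conj ut * vt + ut * conj vt) * vt)‖ := by
          congr 1; ring
      _ ≤ _ := by
        refine (norm_add_le _ _).trans ?_
        simp only [norm_mul, norm_I, norm_real, Real.norm_eq_abs, norm_ofNat, one_mul]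
        gcongr
        · exact norm_mul_sq_norm_sub_le u v ut vt
        · exact norm_conj_mul_add_mul_conj_mul_sub_le u v ut vt
  have hα := mul_le_mul_of_nonneg_left
    (cubic_young_le ‖u - ut‖ ‖v - vt‖ ‖u‖ ‖v‖ ‖ut‖ ‖vt‖) (abs_nonneg α)
  have hβ := mul_le_mul_of_nonneg_left
    (coupling_young_le ‖u - ut‖ ‖v - vt‖ ‖u‖ ‖v‖ ‖ut‖ ‖vt‖) (abs_nonneg β)
  have hUN := mul_le_mul_of_nonneg_left hN (norm_nonneg (u - ut))
  have hinner := real_inner_le_norm (u - ut)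
    (diracN1 m α β u v - diracN1 m α β ut vt - I * m * (v - vt))
  rw [diracDiffWeight]
  linarith

lemma inner_diracN_sub_add_inner_diracN_sub_le (m α β : ℝ) (u v ut vt : ℂ) :
    inner ℝ (u - ut) (diracN1 m α β u v - diracN1 m α β ut vt)
      + inner ℝ (v - vt) (diracN2 m α β u v - diracN2 m α β ut vt)
      ≤ 4 * (|α| + 4 * |β|) * diracDiffWeight u v ut vt := by
  have hu := inner_diracN1_sub_sub_mass_le m α β u v ut vt
  have hv := inner_diracN1_sub_sub_mass_le m α β v u vt ut
  rw [diracDiffWeight_swap] at hv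
  rw [diracN2_eq_diracN1, diracN2_eq_diracN1]
  have hmass := inner_I_mul_add_inner_I_mul m (u - ut) (v - vt)
  rw [inner_sub_right] at hu hv
  linarith

theorem stmt7_general (m α β τ : ℝ)
    (u v ut vt : ℝ → ℂ)
    (hu : ∀ s, HasDerivAt u (diracN1 m α β (u s) (v s)) s)
    (hv : ∀ s, HasDerivAt v (diracN2 m α β (u s) (v s)) s)
    (hut : ∀ s, HasDerivAt ut (diracN1 m α β (ut s) (vt s)) s)
    (hvt : ∀ s, HasDerivAt vt (diracN2 m α β (ut s) (vt s)) s) :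
    ∀ s ∈ Set.Icc (0:ℝ) τ,
      deriv (fun t => ‖u t - ut t‖^2 + ‖v t - vt t‖^2) s
        ≤ 2 * (4 * (|α| + 4 * |β|)) *
          (‖u s - ut s‖^2 * (‖v s‖^2 + ‖vt s‖^2)
            + ‖v s - vt s‖^2 * (‖u s‖^2 + ‖ut s‖^2)) := by
  intro s _
  have hU : HasDerivAt (fun t => u t - ut t) _ s := (hu s).sub (hut s)
  have hV : HasDerivAt (fun t => v t - vt t) _ s := (hv s).sub (hvt s)
  have hL : HasDerivAt (fun t => ‖u t - ut t‖ ^ 2 + ‖v t - vt t‖ ^ 2) _ s :=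
    hU.norm_sq.add hV.norm_sq
  rw [hL.deriv, ← mul_add, mul_assoc]
  gcongr
  exact inner_diracN_sub_add_inner_diracN_sub_le m α β (u s) (v s) (ut s) (vt s)

theorem stmt7 (m α β τ : ℝ) (hm : 0 ≤ m) (hτ : 0 < τ)
    (u v ut vt : ℝ → ℂ)
    (hu : ∀ s, HasDerivAt u (diracN1 m α β (u s) (v s)) s)
    (hv : ∀ s, HasDerivAt v (diracN2 m α β (u s) (v s)) s)
    (hut : ∀ s, HasDerivAt ut (diracN1 m α β (ut s) (vt s)) s)
    (hvt : ∀ s, HasDerivAt vt (diracN2 m α β (ut s) (vt s)) s) :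
    ∀ s ∈ Set.Icc (0:ℝ) τ,
      deriv (fun t => ‖u t - ut t‖^2 + ‖v t - vt t‖^2) s
        ≤ 2 * (4 * (|α| + 4 * |β|)) *
          (‖u s - ut s‖^2 * (‖v s‖^2 + ‖vt s‖^2)
            + ‖v s - vt s‖^2 * (‖u s‖^2 + ‖ut s‖^2)) :=
  stmt7_general m α β τ u v ut vt hu hv hut hvt
end

section
/- Let U, V : ℤ × ℕ → ℝ≥0 and p, q : ℤ × ℕ → ℝ≥0 satisfy the shift relations U(j, n+1') = U(j-1, n), V(j, n+1') = V(j+1, n), p(j, n+1') = p(j-1, n), q(j, n+1') = q(j+1, n) (transport step). For a triangle Δ(j₁,n₁) define Q(n) = Σ_{j₁-n₁+n ≤ j < k ≤ j₁+n₁-n} (U(j,n)·q(k,n) + V(k,n)·p(j,n)) and D(n+1') = Σ_{j=j₁-n₁+n}^{j₁+n₁-n-2} (U(j,n)·q(j+2,n) + V(j+2,n)·p(j,n)). Then Q(n+1') ≤ Q(n) - D(n+1'), where Q(n+1') is the corresponding double sum over j₁-n₁+n+1 ≤ j < k ≤ j₁+n₁-n-1 evaluated at time n+1'. -/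
theorem stmt10 (U V p q U' V' p' q' : ℤ → ℝ)
    (hU : ∀ j, 0 ≤ U j) (hV : ∀ j, 0 ≤ V j) (hp : ∀ j, 0 ≤ p j) (hq : ∀ j, 0 ≤ q j)
    (hU' : ∀ j, U' j = U (j - 1)) (hV' : ∀ j, V' j = V (j + 1))
    (hp' : ∀ j, p' j = p (j - 1)) (hq' : ∀ j, q' j = q (j + 1))
    (j₁ : ℤ) (n₁ n : ℕ) :
    (∑ j ∈ Finset.Icc (j₁ - (n₁ : ℤ) + (n : ℤ) + 1) (j₁ + (n₁ : ℤ) - (n : ℤ) - 1),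
        ∑ k ∈ Finset.Icc (j + 1) (j₁ + (n₁ : ℤ) - (n : ℤ) - 1),
          (U' j * q' k + V' k * p' j))
      ≤ (∑ j ∈ Finset.Icc (j₁ - (n₁ : ℤ) + (n : ℤ)) (j₁ + (n₁ : ℤ) - (n : ℤ)),
          ∑ k ∈ Finset.Icc (j + 1) (j₁ + (n₁ : ℤ) - (n : ℤ)),
            (U j * q k + V k * p j))
        - ∑ j ∈ Finset.Icc (j₁ - (n₁ : ℤ) + (n : ℤ)) (j₁ + (n₁ : ℤ) - (n : ℤ) - 2),
            (U j * q (j + 2) + V (j + 2) * p j) := by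
  simp only [hU', hV', hp', hq']
  set a := j₁ - (n₁ : ℤ) + (n : ℤ) with ha
  set b := j₁ + (n₁ : ℤ) - (n : ℤ) with hb
  have fnn : ∀ j k : ℤ, 0 ≤ U j * q k + V k * p j := fun j k => by
    have := mul_nonneg (hU j) (hq k); have := mul_nonneg (hV k) (hp j); linarith
  -- reindex LHS
  have lhs_eq : (∑ j ∈ Finset.Icc (a + 1) (b - 1),
        ∑ k ∈ Finset.Icc (j + 1) (b - 1), (U (j - 1) * q (k + 1) + V (k + 1) * p (j - 1)))
      = ∑ j ∈ Finset.Icc a (b - 2), ∑ k ∈ Finset.Icc (j + 3) b, (U j * q k + V k * p j) := by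
    rw [show Finset.Icc (a + 1) (b - 1) = Finset.map (addRightEmbedding 1) (Finset.Icc a (b - 2))
        from by rw [Finset.map_add_right_Icc]; ring_nf]
    rw [Finset.sum_map]
    refine Finset.sum_congr rfl fun j hj => ?_
    rw [show Finset.Icc (j + 3) b
        = Finset.map (addRightEmbedding 1) (Finset.Icc (addRightEmbedding 1 j + 1) (b - 1))
        from by rw [Finset.map_add_right_Icc]; simp [addRightEmbedding]; ring_nf]
    rw [Finset.sum_map]
    simp [addRightEmbedding]
  rw [lhs_eq]
  rw [le_sub_iff_add_le, ← Finset.sum_add_distrib]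
  calc ∑ j ∈ Finset.Icc a (b - 2),
        ((∑ k ∈ Finset.Icc (j + 3) b, (U j * q k + V k * p j)) + (U j * q (j + 2) + V (j + 2) * p j))
      ≤ ∑ j ∈ Finset.Icc a (b - 2), ∑ k ∈ Finset.Icc (j + 1) b, (U j * q k + V k * p j) := by
        refine Finset.sum_le_sum fun j hj => ?_
        have hjb : j ≤ b - 2 := (Finset.mem_Icc.mp hj).2
        have hsub : insert (j + 2) (Finset.Icc (j + 3) b) ⊆ Finset.Icc (j + 1) b := by
          intro x hx
          rcases Finset.mem_insert.mp hx with h | h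
          · subst h; simp [Finset.mem_Icc]; omega
          · have := Finset.mem_Icc.mp h; simp [Finset.mem_Icc]; omega
        have hnotmem : (j + 2) ∉ Finset.Icc (j + 3) b := by simp only [Finset.mem_Icc]; omega
        calc (∑ k ∈ Finset.Icc (j + 3) b, (U j * q k + V k * p j)) + (U j * q (j + 2) + V (j + 2) * p j)
            = ∑ k ∈ insert (j + 2) (Finset.Icc (j + 3) b), (U j * q k + V k * p j) := by
              rw [Finset.sum_insert hnotmem]; ring
          _ ≤ ∑ k ∈ Finset.Icc (j + 1) b, (U j * q k + V k * p j) :=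
              Finset.sum_le_sum_of_subset_of_nonneg hsub (fun k _ _ => fnn j k)
    _ ≤ ∑ j ∈ Finset.Icc a b, ∑ k ∈ Finset.Icc (j + 1) b, (U j * q k + V k * p j) := by
        refine Finset.sum_le_sum_of_subset_of_nonneg ?_ fun j _ _ => Finset.sum_nonneg fun k _ => fnn j k
        exact Finset.Icc_subset_Icc_right (by omega)
end

section
/- Let m ≥ 0, α, β ∈ ℝ, M₀ ≥ 1; let û, v̂ : ℝ → ℂ be C¹ functions along a characteristic with |û|, |v̂| ≤ M₀ satisfying û'(s) = i m v̂(s) + i N₁(û(s), v̂(s)) where N₁(u,v) = α u|v|² + 2β(conj(u)v + u·conj(v))v, and let u : ℝ → ℂ be constant (u'(s) = 0). Set Ũ(s) = û(s) - u. Then d/ds |Ũ(s)|² ≤ 2|Ũ(s)|² + 2(m + |α| + 4|β|)²·M₀⁶, and hence for s ∈ [0,τ]: |Ũ(s)|² ≤ exp(2s)·(|Ũ(0)|² + 2(m+|α|+4|β|)²·M₀⁶·s). -/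
/-! Along the characteristic, `(‖Ũ‖²)' = 2⟪Ũ, Ũ'⟫` with `Ũ' = i m v̂ + i N₁(û, v̂)`, and since `M₀ ≥ 1`
every term of `Ũ'` is at most a constant times `M₀³`; hence `2⟪Ũ, Ũ'⟫ ≤ ‖Ũ‖² + C²`. Grönwall's bound
`δ e^{2s} + C² (e^{2s} - 1)` for this differential inequality is at most `e^{2s} (δ + 2 C² s)` because
`1 - e^{-y} ≤ y`. -/

open Complex ComplexConjugate

theorem gronwallBound_le_exp_mul {δ K ε : ℝ} (hK : 0 ≤ K) (hε : 0 ≤ ε) (x : ℝ) :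
    gronwallBound δ K ε x ≤ Real.exp (K * x) * (δ + ε * x) := by
  rcases hK.eq_or_lt with rfl | hK
  · simp [gronwallBound_K0]
  rw [gronwallBound_of_K_ne_0 hK.ne']
  have key : Real.exp (K * x) - 1 ≤ K * (x * Real.exp (K * x)) := by
    have h := mul_le_mul_of_nonneg_right (Real.add_one_le_exp (-(K * x)))
      (Real.exp_pos (K * x)).le
    rw [← Real.exp_add, neg_add_cancel, Real.exp_zero] at h
    linarith
  have : ε / K * (Real.exp (K * x) - 1) ≤ ε * x * Real.exp (K * x) := by
    rw [div_mul_eq_mul_div, div_le_iff₀ hK]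
    nlinarith
  linarith

theorem le_exp_mul_of_hasDerivAt_le {f f' : ℝ → ℝ} {K ε a x : ℝ} (hK : 0 ≤ K) (hε : 0 ≤ ε)
    (hf : ∀ t, HasDerivAt f (f' t) t) (bound : ∀ t, f' t ≤ K * f t + ε) (hx : a ≤ x) :
    f x ≤ Real.exp (K * (x - a)) * (f a + ε * (x - a)) :=
  (le_gronwallBound_of_liminf_deriv_right_le (f' := f')
    (fun t _ => (hf t).continuousAt.continuousWithinAt)
    (fun t _ _ hr => (hf t).hasDerivWithinAt.liminf_right_slope_le hr) le_rfl
    (fun t _ => bound t) x ⟨hx, le_rfl⟩).trans (gronwallBound_le_exp_mul hK hε _)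

theorem two_real_inner_le_norm_sq_add_sq {F : Type*} [NormedAddCommGroup F] [InnerProductSpace ℝ F]
    {x y : F} {C : ℝ} (hy : ‖y‖ ≤ C) : 2 * inner ℝ x y ≤ ‖x‖ ^ 2 + C ^ 2 := by
  have hy2 : ‖y‖ ^ 2 ≤ C ^ 2 := pow_le_pow_left₀ (norm_nonneg y) hy 2
  nlinarith [real_inner_le_norm x y, two_mul_le_add_sq ‖x‖ ‖y‖]

noncomputable def diracNonlinearity (α β : ℝ) (u v : ℂ) : ℂ :=
  α * u * (‖v‖ : ℂ) ^ 2 + 2 * β * (conj u * v + u * conj v) * v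

theorem norm_diracNonlinearity_le {α β M : ℝ} {u v : ℂ} (hu : ‖u‖ ≤ M) (hv : ‖v‖ ≤ M) :
    ‖diracNonlinearity α β u v‖ ≤ (|α| + 4 * |β|) * M ^ 3 := by
  have hM : 0 ≤ M := (norm_nonneg u).trans hu
  have huv : ‖u‖ * ‖v‖ ^ 2 ≤ M ^ 3 := by
    calc ‖u‖ * ‖v‖ ^ 2 ≤ M * M ^ 2 := by gcongr
      _ = M ^ 3 := by ring
  have hcross : ‖conj u * v + u * conj v‖ * ‖v‖ ≤ 2 * M ^ 3 := by
    calc ‖conj u * v + u * conj v‖ * ‖v‖ ≤ (‖u‖ * ‖v‖ + ‖u‖ * ‖v‖) * ‖v‖ := by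
          gcongr
          exact (norm_add_le _ _).trans_eq (by simp)
      _ = 2 * (‖u‖ * ‖v‖ ^ 2) := by ring
      _ ≤ 2 * M ^ 3 := by gcongr
  calc ‖diracNonlinearity α β u v‖
      ≤ |α| * (‖u‖ * ‖v‖ ^ 2) + 2 * |β| * (‖conj u * v + u * conj v‖ * ‖v‖) := by
        refine (norm_add_le _ _).trans_eq ?_
        simp only [norm_mul, norm_pow, norm_real, Real.norm_eq_abs, abs_norm]
        norm_num
        ring
    _ ≤ |α| * M ^ 3 + 2 * |β| * (2 * M ^ 3) := by gcongr
    _ = (|α| + 4 * |β|) * M ^ 3 := by ring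

noncomputable def diracField (m α β : ℝ) (u v : ℂ) : ℂ :=
  I * m * v + I * diracNonlinearity α β u v

theorem norm_diracField_le {m α β M : ℝ} {u v : ℂ} (hm : 0 ≤ m) (hM : 1 ≤ M)
    (hu : ‖u‖ ≤ M) (hv : ‖v‖ ≤ M) :
    ‖diracField m α β u v‖ ≤ (m + |α| + 4 * |β|) * M ^ 3 := by
  have hMM : M ≤ M ^ 3 := le_self_pow₀ hM (by norm_num)
  calc ‖diracField m α β u v‖
      ≤ m * ‖v‖ + ‖diracNonlinearity α β u v‖ := by
        refine (norm_add_le _ _).trans_eq ?_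
        simp [abs_of_nonneg hm]
    _ ≤ m * M ^ 3 + (|α| + 4 * |β|) * M ^ 3 := by
        gcongr
        · exact hv.trans hMM
        · exact norm_diracNonlinearity_le hu hv
    _ = (m + |α| + 4 * |β|) * M ^ 3 := by ring

theorem stmt12_general (m α β M₀ τ : ℝ) (hm : 0 ≤ m) (hM₀ : 1 ≤ M₀)
    (uh vh u : ℝ → ℂ)
    (hbu : ∀ s, ‖uh s‖ ≤ M₀) (hbv : ∀ s, ‖vh s‖ ≤ M₀)
    (hode : ∀ s, HasDerivAt uh
      (Complex.I * m * vh s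
        + Complex.I * (α * uh s * ((‖vh s‖ : ℂ))^2
          + 2 * β * ((starRingEnd ℂ) (uh s) * vh s + uh s * (starRingEnd ℂ) (vh s)) * vh s)) s)
    (hconst : ∀ s, HasDerivAt u 0 s) :
    (∀ s, deriv (fun t => ‖uh t - u t‖^2) s
        ≤ 2 * ‖uh s - u s‖^2 + 2 * (m + |α| + 4 * |β|)^2 * M₀^6)
    ∧ (∀ s ∈ Set.Icc (0:ℝ) τ,
        ‖uh s - u s‖^2
          ≤ Real.exp (2 * s) * (‖uh 0 - u 0‖^2 + 2 * (m + |α| + 4 * |β|)^2 * M₀^6 * s)) := by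
  set w' : ℝ → ℂ := fun s => diracField m α β (uh s) (vh s)
  have hw : ∀ s, HasDerivAt (fun t => uh t - u t) (w' s) s := fun s =>
    ((hode s).sub (hconst s)).congr_deriv (sub_zero _)
  have hnorm_sq : ∀ s, HasDerivAt (fun t => ‖uh t - u t‖ ^ 2) (2 * inner ℝ (uh s - u s) (w' s)) s :=
    fun s => (hw s).norm_sq
  have hbound : ∀ s, 2 * inner ℝ (uh s - u s) (w' s)
      ≤ 2 * ‖uh s - u s‖ ^ 2 + 2 * (m + |α| + 4 * |β|) ^ 2 * M₀ ^ 6 := fun s => by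
    have := two_real_inner_le_norm_sq_add_sq (x := uh s - u s)
      (norm_diracField_le (α := α) (β := β) hm hM₀ (hbu s) (hbv s))
    nlinarith [sq_nonneg ‖uh s - u s‖]
  refine ⟨fun s => (hnorm_sq s).deriv ▸ hbound s, fun s hs => ?_⟩
  simpa using le_exp_mul_of_hasDerivAt_le (by norm_num) (by positivity) hnorm_sq hbound hs.1

theorem stmt12 (m α β M₀ τ : ℝ) (hm : 0 ≤ m) (hM₀ : 1 ≤ M₀) (hτ : 0 < τ)
    (uh vh u : ℝ → ℂ)
    (hbu : ∀ s, ‖uh s‖ ≤ M₀) (hbv : ∀ s, ‖vh s‖ ≤ M₀)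
    (hode : ∀ s, HasDerivAt uh
      (Complex.I * m * vh s
        + Complex.I * (α * uh s * ((‖vh s‖ : ℂ))^2
          + 2 * β * ((starRingEnd ℂ) (uh s) * vh s + uh s * (starRingEnd ℂ) (vh s)) * vh s)) s)
    (hconst : ∀ s, HasDerivAt u 0 s) :
    (∀ s, deriv (fun t => ‖uh t - u t‖^2) s
        ≤ 2 * ‖uh s - u s‖^2 + 2 * (m + |α| + 4 * |β|)^2 * M₀^6)
    ∧ (∀ s ∈ Set.Icc (0:ℝ) τ,
        ‖uh s - u s‖^2
          ≤ Real.exp (2 * s) * (‖uh 0 - u 0‖^2 + 2 * (m + |α| + 4 * |β|)^2 * M₀^6 * s)) :=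
  stmt12_general m α β M₀ τ hm hM₀ uh vh u hbu hbv hode hconst
end

section
/- Let c₀ > 0 and let a, b : ℤ → ℝ≥0 satisfy Σ_{j∈ℤ} a(j)·τ ≤ c₀ and Σ_{j∈ℤ} b(j)·τ ≤ c₀ for some τ > 0. Then for any n₀ ≤ n₁ in ℕ: Σ_{n=n₀}^{n₁} Σ_{j∈ℤ} a(j-n)·b(j+n)·τ² ≤ c₀². -/
theorem stmt17 (c₀ τ : ℝ) (hc₀ : 0 < c₀) (hτ : 0 < τ)
    (a b : ℤ → ℝ) (ha : ∀ j, 0 ≤ a j) (hb : ∀ j, 0 ≤ b j)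
    (hsa : Summable a) (hsb : Summable b)
    (hma : (∑' j : ℤ, a j) * τ ≤ c₀) (hmb : (∑' j : ℤ, b j) * τ ≤ c₀)
    (n₀ n₁ : ℕ) (hn : n₀ ≤ n₁) :
    ∑ n ∈ Finset.Icc n₀ n₁, ∑' j : ℤ, a (j - (n : ℤ)) * b (j + (n : ℤ)) * τ^2
      ≤ c₀^2 := by
  set C := ∑' j : ℤ, b j with hC
  have hC0 : 0 ≤ C := tsum_nonneg hb
  have hbC : ∀ k, b k ≤ C := fun k => Summable.le_tsum hsb k (fun _ _ => hb _)
  -- summability of each term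
  have hSn : ∀ n : ℕ, Summable (fun j : ℤ => a j * b (j + 2 * (n : ℤ)) * τ ^ 2) := by
    intro n
    apply Summable.of_nonneg_of_le
      (fun j => mul_nonneg (mul_nonneg (ha j) (hb _)) (sq_nonneg τ))
      (fun j => ?_) (hsa.mul_right (C * τ ^ 2))
    have : a j * b (j + 2 * n) ≤ a j * C :=
      mul_le_mul_of_nonneg_left (hbC _) (ha j)
    calc a j * b (j + 2 * n) * τ ^ 2 ≤ a j * C * τ ^ 2 := by nlinarith [sq_nonneg τ]
      _ = a j * (C * τ ^ 2) := by ring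
  -- change of variable in each inner tsum
  have key : ∀ n : ℕ, (∑' j : ℤ, a (j - (n : ℤ)) * b (j + (n : ℤ)) * τ ^ 2)
      = ∑' j : ℤ, a j * b (j + 2 * (n : ℤ)) * τ ^ 2 := by
    intro n
    calc ∑' j : ℤ, a (j - (n : ℤ)) * b (j + (n : ℤ)) * τ ^ 2
        = ∑' j : ℤ, a ((j + (n : ℤ)) - (n : ℤ)) * b ((j + (n : ℤ)) + (n : ℤ)) * τ ^ 2 :=
          ((Equiv.addRight (n : ℤ)).tsum_eq
            (fun j => a (j - (n : ℤ)) * b (j + (n : ℤ)) * τ ^ 2)).symm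
      _ = ∑' j : ℤ, a j * b (j + 2 * (n : ℤ)) * τ ^ 2 := by
          apply tsum_congr; intro j
          have h1 : j + (n : ℤ) - (n : ℤ) = j := by ring
          have h2 : j + (n : ℤ) + (n : ℤ) = j + 2 * (n : ℤ) := by ring
          rw [h1, h2]
  simp only [key]
  -- swap sum and tsum
  rw [← Summable.tsum_finsetSum (fun n _ => hSn n)]
  -- bound inner finite sum
  have inner_le : ∀ j : ℤ,
      (∑ n ∈ Finset.Icc n₀ n₁, a j * b (j + 2 * (n : ℤ)) * τ ^ 2)
        ≤ a j * τ * c₀ := by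
    intro j
    have hsum : (∑ n ∈ Finset.Icc n₀ n₁, b (j + 2 * (n : ℤ))) ≤ C := by
      have hinj : Set.InjOn (fun n : ℕ => j + 2 * (n : ℤ)) (Finset.Icc n₀ n₁) := by
        intro x _ y _ h
        simp only at h
        omega
      rw [← Finset.sum_image (f := b) hinj]
      exact Summable.sum_le_tsum _ (fun k _ => hb k) hsb
    have h1 : (∑ n ∈ Finset.Icc n₀ n₁, a j * b (j + 2 * (n : ℤ)) * τ ^ 2)
        = a j * τ * ((∑ n ∈ Finset.Icc n₀ n₁, b (j + 2 * (n : ℤ))) * τ) := by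
      simp only [Finset.mul_sum, Finset.sum_mul]
      apply Finset.sum_congr rfl
      intro n _; ring
    rw [h1]
    have h2 : (∑ n ∈ Finset.Icc n₀ n₁, b (j + 2 * (n : ℤ))) * τ ≤ C * τ :=
      mul_le_mul_of_nonneg_right hsum hτ.le
    have h3 : (∑ n ∈ Finset.Icc n₀ n₁, b (j + 2 * (n : ℤ))) * τ ≤ c₀ := h2.trans hmb
    have h4 : 0 ≤ a j * τ := mul_nonneg (ha j) hτ.le
    exact mul_le_mul_of_nonneg_left h3 h4
  have hS2 : Summable (fun j : ℤ => ∑ n ∈ Finset.Icc n₀ n₁, a j * b (j + 2 * (n : ℤ)) * τ ^ 2) :=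
    (hasSum_sum (fun n _ => (hSn n).hasSum)).summable
  calc (∑' j : ℤ, ∑ n ∈ Finset.Icc n₀ n₁, a j * b (j + 2 * (n : ℤ)) * τ ^ 2)
      ≤ ∑' j : ℤ, a j * τ * c₀ := by
        apply Summable.tsum_le_tsum inner_le hS2 ((hsa.mul_right τ).mul_right c₀)
    _ = (∑' j : ℤ, a j) * τ * c₀ := by
        rw [← tsum_mul_right, ← tsum_mul_right]
    _ ≤ c₀ * c₀ := mul_le_mul_of_nonneg_right hma hc₀.le
    _ = c₀ ^ 2 := (sq c₀).symm
end
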